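/- arXiv:2402.06243 — 3 statements merged into one kernel-verified Lean document; each statement's English description precedes it below -/
import Mathlib

section
/- Let G be a finite group and suppose that for every x ∈ G the set (x^G)² is a single conjugacy class of G, i.e. for every x there exists c ∈ G with (x^G)² = c^G. Then G is nilpotent. -/
open Pointwise

/-- The conjugacy class of `x` in `G`. -/
def conjClass {G : Type*} [Group G] (x : G) : Set G :=
  {a : G | ∃ g : G, a = g⁻¹ * x * g}

section Helpers

variable {G : Type*} [Group G]

lemma mem_conjClass_self (x : G) : x ∈ conjClass x := ⟨1, by group⟩

lemma conj_mem_conjClass {x a : G} (ha : a ∈ conjClass x) (g : G) :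
    g⁻¹ * a * g ∈ conjClass x := by
  obtain ⟨t, rfl⟩ := ha; exact ⟨t * g, by group⟩

lemma conjClass_eq_of_mem {x a : G} (ha : a ∈ conjClass x) : conjClass a = conjClass x := by
  obtain ⟨g, rfl⟩ := ha
  ext b
  constructor
  · rintro ⟨t, rfl⟩; exact ⟨g * t, by group⟩
  · rintro ⟨t, rfl⟩; exact ⟨g⁻¹ * t, by group⟩

lemma one_notMem_conjClass {x : G} (hx : x ≠ 1) : (1 : G) ∉ conjClass x := by
  rintro ⟨g, hg⟩
  apply hx
  have : x = g * (g⁻¹ * x * g) * g⁻¹ := by group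
  rw [this, ← hg]; group

lemma sq_image (x : G) : (fun a => a * a) '' conjClass x = conjClass (x * x) := by
  ext b
  constructor
  · rintro ⟨a, ⟨g, rfl⟩, rfl⟩; exact ⟨g, by group⟩
  · rintro ⟨g, rfl⟩; exact ⟨g⁻¹ * x * g, ⟨g, rfl⟩, by group⟩

lemma conjClass_image {H : Type*} [Group H] (f : G →* H) (hf : Function.Surjective f) (x : G) :
    f '' conjClass x = conjClass (f x) := by
  ext b
  constructor
  · rintro ⟨a, ⟨g, rfl⟩, rfl⟩; exact ⟨f g, by simp⟩
  · rintro ⟨g', rfl⟩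
    obtain ⟨g, rfl⟩ := hf g'
    exact ⟨g⁻¹ * x * g, ⟨g, rfl⟩, by simp⟩

variable [Finite G]

lemma mul_self_eq (h : ∀ x : G, ∃ c : G, conjClass x * conjClass x = conjClass c) (x : G) :
    conjClass x * conjClass x = (fun t => x * t) '' conjClass x := by
  obtain ⟨c, hc⟩ := h x
  have hx2 : x * x ∈ conjClass c := by
    rw [← hc]; exact Set.mul_mem_mul (mem_conjClass_self x) (mem_conjClass_self x)
  symm
  apply Set.eq_of_subset_of_ncard_le (ht := Set.toFinite _)
  · rintro b ⟨k, hk, rfl⟩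
    exact Set.mul_mem_mul (mem_conjClass_self x) hk
  · rw [hc, ← conjClass_eq_of_mem hx2, ← sq_image x,
      Set.ncard_image_of_injective _ (mul_right_injective x)]
    exact Set.ncard_image_le (Set.toFinite _)

lemma translate_eq (h : ∀ x : G, ∃ c : G, conjClass x * conjClass x = conjClass c)
    {x a : G} (ha : a ∈ conjClass x) :
    (fun t => a * t) '' conjClass x = (fun t => x * t) '' conjClass x := by
  have h2 := mul_self_eq h x
  apply Set.eq_of_subset_of_ncard_le (ht := Set.toFinite _)
  · rintro b ⟨k, hk, rfl⟩
    rw [← h2]; exact Set.mul_mem_mul ha hk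
  · rw [Set.ncard_image_of_injective _ (mul_right_injective x),
      Set.ncard_image_of_injective _ (mul_right_injective a)]

lemma inv_mul_mem (h : ∀ x : G, ∃ c : G, conjClass x * conjClass x = conjClass c)
    (x : G) {a b : G} (ha : a ∈ conjClass x) (hb : b ∈ conjClass x) :
    a⁻¹ * b ∈ (fun t => x⁻¹ * t) '' conjClass x := by
  -- Step 1: (x⁻¹ * a) * k ∈ K for all k ∈ K
  have step1 : ∀ k ∈ conjClass x, (x⁻¹ * a) * k ∈ conjClass x := by
    intro k hk
    have : a * k ∈ (fun t => x * t) '' conjClass x := by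
      rw [← translate_eq h ha]; exact ⟨k, hk, rfl⟩
    obtain ⟨k', hk', he⟩ := this
    have : (x⁻¹ * a) * k = k' := by
      simp only at he
      rw [mul_assoc, ← he]; group
    rw [this]; exact hk'
  -- Step 2: (a * x⁻¹) * k ∈ K for all k ∈ K
  have step2 : ∀ k ∈ conjClass x, (a * x⁻¹) * k ∈ conjClass x := by
    intro k hk
    have h1 : a⁻¹ * k * a ∈ conjClass x := conj_mem_conjClass hk a
    have h2 : (x⁻¹ * a) * (a⁻¹ * k * a) ∈ conjClass x := step1 _ h1
    have h3 : (a⁻¹)⁻¹ * ((x⁻¹ * a) * (a⁻¹ * k * a)) * a⁻¹ ∈ conjClass x :=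
      conj_mem_conjClass h2 a⁻¹
    have : (a * x⁻¹) * k = (a⁻¹)⁻¹ * ((x⁻¹ * a) * (a⁻¹ * k * a)) * a⁻¹ := by group
    rw [this]; exact h3
  -- Step 3: the image of K under left mult by a*x⁻¹ equals K
  have step3 : (fun t => (a * x⁻¹) * t) '' conjClass x = conjClass x := by
    apply Set.eq_of_subset_of_ncard_le (ht := Set.toFinite _)
    · rintro b ⟨k, hk, rfl⟩; exact step2 k hk
    · rw [Set.ncard_image_of_injective _ (mul_right_injective (a * x⁻¹))]
  -- conclude
  have hb' : b ∈ (fun t => (a * x⁻¹) * t) '' conjClass x := by rw [step3]; exact hb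
  obtain ⟨k, hk, he⟩ := hb'
  refine ⟨k, hk, ?_⟩
  simp only at he ⊢
  rw [← he]; group

lemma N_conj_closed (h : ∀ x : G, ∃ c : G, conjClass x * conjClass x = conjClass c)
    (x g : G) {n : G} (hn : n ∈ (fun t => x⁻¹ * t) '' conjClass x) :
    g⁻¹ * n * g ∈ (fun t => x⁻¹ * t) '' conjClass x := by
  obtain ⟨k, hk, rfl⟩ := hn
  have h1 : g⁻¹ * x * g ∈ conjClass x := ⟨g, rfl⟩
  have h2 : g⁻¹ * k * g ∈ conjClass x := conj_mem_conjClass hk g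
  have h3 := inv_mul_mem h x h1 h2
  have e : g⁻¹ * ((fun t => x⁻¹ * t) k) * g = (g⁻¹ * x * g)⁻¹ * (g⁻¹ * k * g) := by
    simp only; group
  rw [e]; exact h3

lemma exists_central (h : ∀ x : G, ∃ c : G, conjClass x * conjClass x = conjClass c)
    [Nontrivial G] : ∃ z : G, z ≠ 1 ∧ ∀ g : G, g * z = z * g := by
  obtain ⟨x, hx1, hmin⟩ := Set.exists_min_image {g : G | g ≠ 1}
    (fun g => (conjClass g).ncard) (Set.toFinite _) (by obtain ⟨g, hg⟩ := exists_ne (1 : G); exact ⟨g, hg⟩)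
  simp only [Set.mem_setOf_eq] at hx1 hmin
  by_cases hcard : (conjClass x).ncard ≤ 1
  · -- the class of x is a singleton, so x is central
    have hone : (conjClass x).ncard = 1 := by
      have : 0 < (conjClass x).ncard :=
        (Set.ncard_pos (Set.toFinite _)).mpr ⟨x, mem_conjClass_self x⟩
      omega
    obtain ⟨a, ha⟩ := Set.ncard_eq_one.mp hone
    have hxa : x = a := by
      have := mem_conjClass_self x
      rw [ha] at this; exact this
    refine ⟨x, hx1, fun g => ?_⟩
    have hg : g⁻¹ * x * g ∈ conjClass x := ⟨g, rfl⟩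
    rw [ha, ← hxa] at hg
    have : g⁻¹ * x * g = x := hg
    have e : g * (g⁻¹ * x * g) = g * x := by rw [this]
    have e2 : x * g = g * x := by
      rw [← e]; group
    exact e2.symm
  · exfalso
    push_neg at hcard
    set N := (fun t => x⁻¹ * t) '' conjClass x with hN
    have hNcard : N.ncard = (conjClass x).ncard :=
      Set.ncard_image_of_injective _ (mul_right_injective x⁻¹)
    have h1N : (1 : G) ∈ N := ⟨x, mem_conjClass_self x, by simp⟩
    -- N has an element ≠ 1
    have : ∃ y ∈ N, y ≠ 1 := by
      by_contra hcon
      push_neg at hcon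
      have hsub : N ⊆ {1} := fun y hy => hcon y hy
      have := Set.ncard_le_ncard hsub (Set.toFinite _)
      rw [Set.ncard_singleton] at this
      omega
    obtain ⟨y, hyN, hy1⟩ := this
    have hsub : conjClass y ⊆ N := by
      rintro b ⟨g, rfl⟩
      exact N_conj_closed h x g hyN
    have hss : conjClass y ⊂ N :=
      ⟨hsub, fun hsup => one_notMem_conjClass hy1 (hsup h1N)⟩
    have hlt : (conjClass y).ncard < N.ncard := Set.ncard_lt_ncard hss (Set.toFinite _)
    have hge := hmin y hy1
    omega

end Helpers

lemma aux_nilpotent : ∀ (n : ℕ) (G : Type u) [Group G] [Finite G], Nat.card G ≤ n →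
    (∀ x : G, ∃ c : G, conjClass x * conjClass x = conjClass c) → Group.IsNilpotent G := by
  intro n
  induction n with
  | zero =>
    intro G _ _ hc _
    have := Nat.card_pos (α := G)
    omega
  | succ n ih =>
    intro G _ _ hc h
    rcases subsingleton_or_nontrivial G with hs | hnt
    · refine ⟨0, ?_⟩
      rw [upperCentralSeries_zero]
      ext g
      simp [Subgroup.mem_bot, Subsingleton.elim g 1]
    · obtain ⟨z, hz1, hz⟩ := exists_central h
      have hzc : z ∈ Subgroup.center G := Subgroup.mem_center_iff.mpr hz
      have hcnt : Nontrivial (Subgroup.center G) :=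
        ⟨⟨z, hzc⟩, 1, by simpa [Subtype.ext_iff] using hz1⟩
      have hcen2 : 1 < Nat.card (Subgroup.center G) := Finite.one_lt_card_iff_nontrivial.mpr hcnt
      have hmul := Subgroup.card_eq_card_quotient_mul_card_subgroup (Subgroup.center G)
      have hQpos : 0 < Nat.card (G ⧸ Subgroup.center G) := Nat.card_pos
      have hlt : Nat.card (G ⧸ Subgroup.center G) < Nat.card G := by
        rw [hmul]; nlinarith
      have hq : ∀ x : G ⧸ Subgroup.center G, ∃ c : G ⧸ Subgroup.center G,
          conjClass x * conjClass x = conjClass c := by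
        intro xbar
        obtain ⟨x, rfl⟩ := QuotientGroup.mk'_surjective (Subgroup.center G) xbar
        obtain ⟨c, hcc⟩ := h x
        refine ⟨QuotientGroup.mk' (Subgroup.center G) c, ?_⟩
        rw [← conjClass_image _ (QuotientGroup.mk'_surjective _) x,
          ← conjClass_image _ (QuotientGroup.mk'_surjective _) c,
          ← Set.image_mul, hcc]
      have hQ := ih (G ⧸ Subgroup.center G) (by omega) hq
      exact of_quotient_center_nilpotent hQ

/-- **Corollary E (particular case `π = π(G)`).** If for every element `x` of a finite group
`G` the square of the conjugacy class `x^G` is a single conjugacy class, then `G` is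
nilpotent. -/
theorem squares_of_all_classes_nilpotent
    {G : Type*} [Group G] [Fintype G]
    (h : ∀ x : G, ∃ c : G, conjClass x * conjClass x = conjClass c) :
    Group.IsNilpotent G := by
  exact aux_nilpotent (Nat.card G) G le_rfl h
end

section
/- Let G be a finite group, let x ∈ G with x of order strictly greater than 2, let K = x^G with |K| ≥ 3, and suppose that K² = {1} ∪ D where D = d^G is the conjugacy class of some element d ≠ 1 of G. Then |D| = |K|. -/
open Pointwise

lemma conjClass_eq_orbit {G : Type*} [Group G] (y : G) :
    conjClass y = MulAction.orbit (ConjAct G) y := by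
  ext a
  constructor
  · rintro ⟨g, rfl⟩
    exact ⟨ConjAct.toConjAct g⁻¹, by simp [ConjAct.smul_def, mul_assoc]⟩
  · rintro ⟨g, rfl⟩
    exact ⟨(ConjAct.ofConjAct g)⁻¹, by simp [ConjAct.smul_def, mul_assoc]⟩

lemma conjClass_eq_of_mem_s16 {G : Type*} [Group G] {a b : G} (h : b ∈ conjClass a) :
    conjClass b = conjClass a := by
  obtain ⟨g, rfl⟩ := h
  ext c
  constructor
  · rintro ⟨h, rfl⟩
    exact ⟨g * h, by group⟩
  · rintro ⟨h, rfl⟩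
    exact ⟨g⁻¹ * h, by group⟩

lemma ncard_conjClass_sq_dvd {G : Type*} [Group G] [Fintype G] (x : G) :
    (conjClass (x * x)).ncard ∣ (conjClass x).ncard := by
  rw [conjClass_eq_orbit, conjClass_eq_orbit, ← MulAction.index_stabilizer,
    ← MulAction.index_stabilizer]
  apply Subgroup.index_dvd_of_le
  intro g hg
  have hg' : g • x = x := hg
  show g • (x * x) = x * x
  rw [ConjAct.smul_def] at hg' ⊢
  rw [show ConjAct.ofConjAct g * (x * x) * (ConjAct.ofConjAct g)⁻¹ =
    (ConjAct.ofConjAct g * x * (ConjAct.ofConjAct g)⁻¹) *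
    (ConjAct.ofConjAct g * x * (ConjAct.ofConjAct g)⁻¹) by group, hg']

/-- In Case 2.b of Theorem A: if `x` has order greater than 2, `K = x^G` has size at least
3 and `K² = {1} ∪ D` for a conjugacy class `D = d^G` of a non-identity element `d`, then
`|D| = |K|`. -/
theorem square_of_class_case_2b_card_eq
    {G : Type*} [Group G] [Fintype G] (x d : G)
    (hx : 2 < orderOf x) (hd : d ≠ 1)
    (K D : Set G) (hK : K = conjClass x) (hD : D = conjClass d)
    (hKcard : 3 ≤ K.ncard)
    (hKD : K * K = {1} ∪ D) :
    D.ncard = K.ncard := by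
  subst hK hD
  -- x * x ∈ D
  have hxK : x ∈ conjClass x := ⟨1, by group⟩
  have hx2ne : x * x ≠ 1 := by
    intro h
    have : orderOf x ∣ 2 := orderOf_dvd_of_pow_eq_one (by rwa [pow_two])
    have := Nat.le_of_dvd (by norm_num) this
    omega
  have hx2 : x * x ∈ ({1} ∪ conjClass d : Set G) := by
    rw [← hKD]; exact Set.mul_mem_mul hxK hxK
  have hx2D : x * x ∈ conjClass d := by
    rcases hx2 with h | h
    · exact absurd h hx2ne
    · exact h
  have hDeq : conjClass d = conjClass (x * x) := (conjClass_eq_of_mem_s16 hx2D).symm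
  rw [hDeq]
  -- divisibility
  have hdvd : (conjClass (x * x)).ncard ∣ (conjClass x).ncard := ncard_conjClass_sq_dvd x
  -- |K| ≤ |D| + 1
  have hfin : ∀ s : Set G, s.Finite := fun s => Set.toFinite s
  have himg : (fun k => k * x) '' conjClass x ⊆ ({1} ∪ conjClass (x * x) : Set G) := by
    rintro a ⟨k, hk, rfl⟩
    rw [← hDeq, ← hKD]
    exact Set.mul_mem_mul hk hxK
  have hcard_img : ((fun k => k * x) '' conjClass x).ncard = (conjClass x).ncard :=
    Set.ncard_image_of_injective _ (mul_left_injective x)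
  have hle : (conjClass x).ncard ≤ (conjClass (x * x)).ncard + 1 := by
    calc (conjClass x).ncard = ((fun k => k * x) '' conjClass x).ncard := hcard_img.symm
      _ ≤ ({1} ∪ conjClass (x * x) : Set G).ncard :=
          Set.ncard_le_ncard himg (hfin _)
      _ ≤ (conjClass (x * x)).ncard + ({1} : Set G).ncard := by
          rw [Set.union_comm]; exact Set.ncard_union_le _ _
      _ = (conjClass (x * x)).ncard + 1 := by rw [Set.ncard_singleton]
  -- combine
  set n := (conjClass x).ncard
  set m := (conjClass (x * x)).ncard
  have hmpos : 0 < m := by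
    have : (x * x) ∈ conjClass (x * x) := ⟨1, by group⟩
    have : (conjClass (x * x)).Nonempty := ⟨_, this⟩
    exact (Set.ncard_pos (hfin _)).mpr this
  have hmle : m ≤ n := Nat.le_of_dvd (by omega) hdvd
  rcases Nat.lt_or_ge m n with h | h
  · exfalso
    have hm : m = n - 1 := by omega
    have : m ∣ n - m := (Nat.dvd_sub hdvd dvd_rfl)
    have : n - m = 1 := by omega
    have : m ∣ 1 := by rw [← this]; exact Nat.dvd_sub hdvd dvd_rfl
    have := Nat.le_of_dvd one_pos this
    omega
  · omega
end

section
/- Let G be a finite group, let x ∈ G with x of order 2, let K = x^G with |K| ≥ 3, and suppose that K² = {1} ∪ D where D = d^G is the conjugacy class of an element d of order strictly greater than 2. Then |K| is odd and every element of D has odd order. -/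
open Pointwise

section Aux

variable {G : Type*} [Group G]

lemma conjClass_orderOf {x a : G} (ha : a ∈ conjClass x) : orderOf a = orderOf x := by
  obtain ⟨g, rfl⟩ := ha
  have : g⁻¹ * x * g = (MulAut.conj g⁻¹) x := by
    simp [MulAut.conj_apply]
  rw [this]
  exact orderOf_injective (MulAut.conj g⁻¹).toMonoidHom (MulEquiv.injective _) x

lemma conjClass_conj_mem {x a : G} (ha : a ∈ conjClass x) (h : G) :
    h⁻¹ * a * h ∈ conjClass x := by
  obtain ⟨g, rfl⟩ := ha
  exact ⟨g * h, by group⟩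

end Aux

/-- In Case 2.a of Theorem A: if `x` is an involution of a finite group `G` whose conjugacy
class `K = x^G` has size at least 3 and satisfies `K² = {1} ∪ D` where `D = d^G` is the
conjugacy class of an element `d` of order greater than 2, then `|K|` is odd and every
element of `D` has odd order. -/
theorem square_of_class_case_2a_odd
    {G : Type*} [Group G] [Fintype G] (x d : G)
    (hx : orderOf x = 2) (hd : 2 < orderOf d)
    (K D : Set G) (hK : K = conjClass x) (hD : D = conjClass d)
    (hKcard : 3 ≤ K.ncard)
    (hKD : K * K = {1} ∪ D) :
    Odd K.ncard ∧ ∀ g ∈ D, Odd (orderOf g) := by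
  classical
  subst hK hD
  set K : Set G := conjClass x with hKdef
  set D : Set G := conjClass d with hDdef
  -- basic facts about elements of K
  have hK2 : ∀ a ∈ K, orderOf a = 2 := fun a ha => (conjClass_orderOf ha).trans hx
  have hKsq : ∀ a ∈ K, a * a = 1 := by
    intro a ha
    have := pow_orderOf_eq_one a
    rwa [hK2 a ha, pow_two] at this
  have hKne1 : ∀ a ∈ K, a ≠ 1 := by
    intro a ha h1
    have := hK2 a ha
    rw [h1, orderOf_one] at this
    norm_num at this
  have hKinv : ∀ a ∈ K, a⁻¹ = a := fun a ha => inv_eq_of_mul_eq_one_right (hKsq a ha)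
  have hxK : x ∈ K := mem_conjClass_self x
  -- order of elements of D
  have hDorder : ∀ g ∈ D, orderOf g = orderOf d := fun g hg => conjClass_orderOf hg
  -- products of distinct elements of K lie in D
  have hprod : ∀ a ∈ K, ∀ b ∈ K, a ≠ b → a * b ∈ D := by
    intro a ha b hb hab
    have hmem : a * b ∈ K * K := Set.mul_mem_mul ha hb
    rw [hKD] at hmem
    rcases hmem with h1 | hDm
    · exfalso
      apply hab
      have : a * b = 1 := h1
      calc a = a * (b * b) := by rw [hKsq b hb, mul_one]
        _ = (a * b) * b := by group
        _ = b := by rw [this, one_mul]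
    · exact hDm
  -- Part 1 : |K| is odd
  have hfix : ∀ b ∈ K, x * b * x = b → b = x := by
    intro b hb hcomm
    by_contra hbx
    have hxb : x * b ∈ D := hprod x hxK b hb (fun h => hbx h.symm)
    have hsq : (x * b) ^ 2 = 1 := by
      rw [pow_two]
      calc x * b * (x * b) = (x * b * x) * b := by group
        _ = b * b := by rw [hcomm]
        _ = 1 := hKsq b hb
    have hdvd : orderOf (x * b) ∣ 2 := orderOf_dvd_of_pow_eq_one hsq
    have : orderOf (x * b) = orderOf d := hDorder _ hxb
    have h2 : orderOf d ≤ 2 := this ▸ Nat.le_of_dvd (by norm_num) hdvd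
    omega
  have hodd : Odd K.ncard := by
    have hKfin : K.Finite := Set.toFinite K
    haveI : Fintype K := hKfin.fintype
    -- conjugation by x as an endomorphism of K
    have hxx : x * x = 1 := hKsq x hxK
    have hmap : ∀ b : K, x * (b : G) * x ∈ K := by
      intro b
      have := conjClass_conj_mem b.2 x
      rwa [hKinv x hxK] at this
    let f : Function.End K := fun b => ⟨x * (b : G) * x, hmap b⟩
    have hf2 : f ^ 2 ^ 1 = 1 := by
      funext b
      show (⟨x * (x * (b : G) * x) * x, _⟩ : K) = b
      apply Subtype.ext
      show x * (x * (b : G) * x) * x = b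
      calc x * (x * (b : G) * x) * x = (x * x) * (b : G) * (x * x) := by group
        _ = b := by rw [hxx, one_mul, mul_one]
    haveI : Fact (Nat.Prime 2) := ⟨Nat.prime_two⟩
    have hmod := Equiv.Perm.card_fixedPoints_modEq (f := f) hf2
    have hfixed : f.fixedPoints = {(⟨x, hxK⟩ : K)} := by
      ext b
      constructor
      · intro hb
        have hb' : x * (b : G) * x = b := congrArg Subtype.val hb
        have := hfix b b.2 hb'
        simp [Set.mem_singleton_iff, Subtype.ext_iff, this]
      · intro hb
        rw [Set.mem_singleton_iff] at hb
        subst hb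
        show f _ = _
        apply Subtype.ext
        show x * x * x = x
        rw [hxx, one_mul]
    have hcard1 : Fintype.card f.fixedPoints = 1 := by
      have hn : Nat.card f.fixedPoints = 1 := by
        rw [hfixed, Nat.card_coe_set_eq, Set.ncard_singleton]
      rwa [Nat.card_eq_fintype_card] at hn
    rw [hcard1] at hmod
    have hcardK : K.ncard = Fintype.card K := by
      rw [← Nat.card_coe_set_eq, Nat.card_eq_fintype_card]
    rw [hcardK]
    rcases Nat.even_or_odd (Fintype.card K) with he | ho
    · exfalso
      have h0 : Fintype.card ↥K % 2 = 0 := Nat.even_iff.mp he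
      have h1 : (1 : ℕ) % 2 = 1 := rfl
      unfold Nat.ModEq at hmod
      omega
    · exact ho
  refine ⟨hodd, ?_⟩
  -- Part 2 : every element of D has odd order
  have hd1 : d ≠ 1 := by
    intro h; rw [h, orderOf_one] at hd; omega
  have hdD : d ∈ D := mem_conjClass_self d
  have hdKK : d ∈ K * K := by rw [hKD]; exact Or.inr hdD
  obtain ⟨a, ha, b, hb, hab0⟩ := hdKK
  have hab : a * b = d := hab0
  have haa : a * a = 1 := hKsq a ha
  have hbb : b * b = 1 := hKsq b hb
  have hainv : a⁻¹ = a := hKinv a ha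
  -- a * d * a = d⁻¹
  have hada : a * d * a = d⁻¹ := by
    rw [← hab]
    calc a * (a * b) * a = (a * a) * (b * a) := by group
      _ = b * a := by rw [haa, one_mul]
      _ = (a * b)⁻¹ := by rw [mul_inv_rev, hainv, hKinv b hb]
  have hconj_pow : ∀ j : ℕ, a * d ^ j * a = (d ^ j)⁻¹ := by
    intro j
    have : a * d ^ j * a⁻¹ = (a * d * a⁻¹) ^ j := conj_pow.symm
    rw [hainv] at this
    rw [this, hada, inv_pow]
  have hconj_pow' : ∀ j : ℕ, a * (d ^ j)⁻¹ * a = d ^ j := by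
    intro j
    rw [← hconj_pow j]
    calc a * (a * d ^ j * a) * a = (a * a) * d ^ j * (a * a) := by group
      _ = d ^ j := by rw [haa, one_mul, mul_one]
  -- all "reflections" a * d^k are in K
  have hrefl : ∀ k : ℕ, a * d ^ k ∈ K := by
    intro k
    rcases Nat.even_or_odd k with ⟨j, hj⟩ | ⟨j, hj⟩
    · have e1 : a * ((d ^ j)⁻¹ * a * d ^ j) = d ^ (j + j) := by
        calc a * ((d ^ j)⁻¹ * a * d ^ j) = (a * (d ^ j)⁻¹ * a) * d ^ j := by group
          _ = d ^ j * d ^ j := by rw [hconj_pow' j]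
          _ = d ^ (j + j) := (pow_add d j j).symm
      have heq : (d ^ j)⁻¹ * a * d ^ j = a * d ^ k := by
        calc (d ^ j)⁻¹ * a * d ^ j = (a * a) * ((d ^ j)⁻¹ * a * d ^ j) := by
              rw [haa, one_mul]
          _ = a * d ^ (j + j) := by rw [mul_assoc, e1]
          _ = a * d ^ k := by rw [hj]
      exact heq ▸ conjClass_conj_mem ha (d ^ j)
    · have had : a * d = b := by
        rw [← hab, ← mul_assoc, haa, one_mul]
      have e1 : a * ((d ^ j)⁻¹ * b * d ^ j) = d ^ (2 * j + 1) := by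
        calc a * ((d ^ j)⁻¹ * b * d ^ j)
            = a * ((d ^ j)⁻¹ * (a * d) * d ^ j) := by rw [had]
          _ = (a * (d ^ j)⁻¹ * a) * (d * d ^ j) := by group
          _ = d ^ j * (d * d ^ j) := by rw [hconj_pow' j]
          _ = d ^ j * d ^ (j + 1) := by rw [← pow_succ']
          _ = d ^ (2 * j + 1) := by rw [← pow_add]; congr 1; omega
      have heq : (d ^ j)⁻¹ * b * d ^ j = a * d ^ k := by
        calc (d ^ j)⁻¹ * b * d ^ j = (a * a) * ((d ^ j)⁻¹ * b * d ^ j) := by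
              rw [haa, one_mul]
          _ = a * d ^ (2 * j + 1) := by rw [mul_assoc, e1]
          _ = a * d ^ k := by rw [hj]
      exact heq ▸ conjClass_conj_mem hb (d ^ j)
  -- order of d is odd
  have hOddd : Odd (orderOf d) := by
    by_contra hev
    rw [Nat.not_odd_iff_even] at hev
    obtain ⟨m, hm⟩ := hev
    have hm' : orderOf d = 2 * m := by omega
    have hmpos : 0 < m := by omega
    have hmlt : m < orderOf d := by omega
    have hz1 : d ^ m ≠ 1 := pow_ne_one_of_lt_orderOf (by omega) hmlt
    have hzz : d ^ m * d ^ m = 1 := by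
      rw [← pow_add]
      have : m + m = orderOf d := by omega
      rw [this, pow_orderOf_eq_one]
    set c := a * d ^ m with hc
    have hcK : c ∈ K := hrefl m
    have hac : a ≠ c := by
      intro h
      apply hz1
      have : a * a = a * (a * d ^ m) := by rw [← hc, ← h]
      rw [haa, ← mul_assoc, haa, one_mul] at this
      exact this.symm
    have hzD : a * c ∈ D := hprod a ha c hcK hac
    have hzval : a * c = d ^ m := by
      rw [hc, ← mul_assoc, haa, one_mul]
    rw [hzval] at hzD
    have ho : orderOf (d ^ m) = orderOf d := hDorder _ hzD
    have hdvd : orderOf (d ^ m) ∣ 2 := by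
      apply orderOf_dvd_of_pow_eq_one
      rw [pow_two]; exact hzz
    have : orderOf d ≤ 2 := ho ▸ Nat.le_of_dvd (by norm_num) hdvd
    omega
  intro g hg
  rw [hDorder g hg]
  exact hOddd
end
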